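/- Let p be a probability mass function on the positive integers with p_j monotonically nonincreasing, and suppose there exist M > 0 and α ∈ (0,1) with p_j ≤ M j^{−1/α} for all j. Write E[(1−p_X)^m] = ∑_i p_i (1−p_i)^m. Then: (i) there exists C₁ > 0, not depending on n, such that ∑_{m=1}^{n} ∑_{k=n−m+1}^{n} E[(1−p_X)^m] / (mk) ≤ C₁ ( n^{−(1−α)} + (log n)/n ) for all n ≥ 2; (ii) for every positive integer ℓ there exists C₂ > 0 such that ∑_{m=1}^{n} ∑_{k=n−m+1}^{n} ( ∑_i p_i^ℓ (1−p_i)^{m+k} ) / (mk) ≤ C₂ / n^{ℓ−α} for all n ≥ 1; and (iii) for every positive integer ℓ there exists C₃ > 0 such that ∑_{m=n+1}^{∞} ∑_{k=1}^{m−1} ( ∑_i p_i^ℓ (1−p_i)^m ) / (k(m−k)) ≤ C₃ (log n) / n^{ℓ−α} for all n ≥ 2. -/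

import Mathlib

open Filter Asymptotics

/-- `J m` is the `m`-th harmonic number, with `J 0 = 0`. -/
noncomputable def J (m : ℕ) : ℝ := ∑ k ∈ Finset.range m, (1 : ℝ) / (k + 1)

/-- `mcount x i` is the number of occurrences of the symbol `x i` in the sample `x`. -/
def mcount {n : ℕ} (x : Fin n → ℕ+) (i : Fin n) : ℕ :=
  (Finset.univ.filter fun k => x k = x i).card

/-- The harmonic entropy estimator. -/
noncomputable def Hhat {n : ℕ} (x : Fin n → ℕ+) : ℝ :=
  ((n : ℝ))⁻¹ * ∑ i, (J (n - 1) - J (mcount x i - 1))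

/-- The probability that an i.i.d. sample of size `n` from the pmf `p` equals `x`. -/
noncomputable def Pn {n : ℕ} (p : ℕ+ → ℝ) (x : Fin n → ℕ+) : ℝ := ∏ i, p (x i)

/-- The expectation of the harmonic entropy estimator over an i.i.d. sample of size `n`. -/
noncomputable def EHhat (p : ℕ+ → ℝ) (n : ℕ) : ℝ := ∑' x : Fin n → ℕ+, Pn p x * Hhat x

/-- The Shannon entropy of the pmf `p`. -/
noncomputable def Hent (p : ℕ+ → ℝ) : ℝ := -∑' j : ℕ+, p j * Real.log (p j)

open Finset Real
open scoped Nat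

/-!
Write `F_ℓ(s) = ∑ᵢ pᵢ^ℓ (1 - pᵢ)^s`. Everything rests on the decay `F_ℓ(s) = O(s^(α - ℓ))`:
cut the sum at `i ≈ s^α`; each of the first `s^α` terms is at most `ℓ! / s^ℓ`, because
`x^ℓ (1 - x)^s ≤ x^ℓ e^(-s x)`, and the tail is at most `∑_{i > s^α} M^ℓ i^(-ℓ/α) = O(s^(α - ℓ))`.

The double sums are then elementary. On the triangle `m + k > n` one has
`1 / (m k) = (1/m + 1/k) / (m + k) ≤ (1/m + 1/k) / n`, so `∑ 1 / (m k) ≤ 2`, which gives (ii);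
for (i), either `m > n/2`, where `F_1(m) = O(n^(α - 1))`, or `k > n/2`, where `1/k ≤ 2/n`.
For (iii), `∑_{k < m} 1 / (k (m - k)) = 2 H_{m-1} / m`, and
`∑_{m > n} m^(-δ-1) log m = O(log n · n^(-δ))` because `log m ≤ log n + (m/n)^(δ/2) · 2/δ`.
-/

lemma pow_mul_one_sub_pow_le {x : ℝ} (hx0 : 0 ≤ x) (hx1 : x ≤ 1) (l : ℕ) {s : ℕ} (hs : 0 < s) :
    x ^ l * (1 - x) ^ s ≤ l ! / (s : ℝ) ^ l := by
  have hs' : (0 : ℝ) < s := by exact_mod_cast hs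
  have hdecay : (1 - x) ^ s ≤ exp (-(s * x)) := by
    simpa [hs'.ne'] using one_sub_div_pow_le_exp_neg (n := s) (t := s * x) (by nlinarith)
  have hpoly : (s * x) ^ l ≤ l ! * exp (s * x) := by
    have := pow_div_factorial_le_exp _ (mul_nonneg hs'.le hx0) l
    rw [div_le_iff₀ (by positivity)] at this
    linarith
  calc x ^ l * (1 - x) ^ s ≤ x ^ l * exp (-(s * x)) := by gcongr
    _ = (s * x) ^ l * exp (-(s * x)) / (s : ℝ) ^ l := by rw [mul_pow]; field_simp
    _ ≤ l ! * exp (s * x) * exp (-(s * x)) / (s : ℝ) ^ l := by gcongr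
    _ = l ! / (s : ℝ) ^ l := by rw [mul_assoc, ← exp_add]; simp

lemma mul_rpow_sub_one_le_sub_rpow {a : ℝ} (ha0 : 0 ≤ a) (ha1 : a ≤ 1) {x : ℝ} (hx : 0 ≤ x) :
    a * (x + 1) ^ (a - 1) ≤ (x + 1) ^ a - x ^ a := by
  have hx1 : 0 < x + 1 := by linarith
  have hb := rpow_one_add_le_one_add_mul_self (s := -(x + 1)⁻¹) (by
    rw [neg_le_neg_iff]; exact inv_le_one_of_one_le₀ (by linarith)) ha0 ha1
  have hratio : 1 + -(x + 1)⁻¹ = x * (x + 1)⁻¹ := by field_simp; ring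
  rw [hratio, mul_rpow hx (inv_nonneg.2 hx1.le), inv_rpow hx1.le] at hb
  have hsplit : (x + 1) ^ (a - 1) = (x + 1) ^ a * (x + 1)⁻¹ := by
    rw [rpow_sub_one hx1.ne', div_eq_mul_inv]
  have hpos : 0 < (x + 1) ^ a := rpow_pos_of_pos hx1 a
  rw [hsplit]
  have := mul_le_mul_of_nonneg_left hb hpos.le
  field_simp at this ⊢
  nlinarith [this]

lemma mul_rpow_neg_le_sub_rpow {β : ℝ} (hβ : 0 ≤ β) {x : ℝ} (hx : 0 < x) :
    β * (x + 1) ^ (-(β + 1)) ≤ x ^ (-β) - (x + 1) ^ (-β) := by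
  have hx1 : 0 < x + 1 := by linarith
  have hu : 0 < (x + 1) / x := by positivity
  have hexp : 1 + β * (1 - x / (x + 1)) ≤ ((x + 1) / x) ^ β := by
    rw [rpow_def_of_pos hu]
    have := one_sub_inv_le_log_of_pos hu
    rw [inv_div] at this
    nlinarith [add_one_le_exp (log ((x + 1) / x) * β)]
  have hsplit : x ^ (-β) = ((x + 1) / x) ^ β * (x + 1) ^ (-β) := by
    rw [div_rpow hx1.le hx.le, rpow_neg hx.le, rpow_neg hx1.le]
    field_simp
  have hpow : (x + 1) ^ (-(β + 1)) = (x + 1) ^ (-β) * (x + 1)⁻¹ := by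
    rw [neg_add, rpow_add hx1, rpow_neg_one]
  have hpos : 0 < (x + 1) ^ (-β) := rpow_pos_of_pos hx1 _
  have h1 : 1 - x / (x + 1) = (x + 1)⁻¹ := by field_simp; ring
  rw [hsplit, hpow]
  rw [h1] at hexp
  nlinarith [mul_le_mul_of_nonneg_right hexp hpos.le]

lemma sum_Icc_rpow_sub_one_le {a : ℝ} (ha0 : 0 < a) (ha1 : a ≤ 1) (N : ℕ) :
    ∑ m ∈ Icc 1 N, (m : ℝ) ^ (a - 1) ≤ (N : ℝ) ^ a / a := by
  induction N with
  | zero => simp [zero_rpow ha0.ne']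
  | succ N ih =>
    have hstep := mul_rpow_sub_one_le_sub_rpow ha0.le ha1 (Nat.cast_nonneg N)
    rw [sum_Icc_succ_top (by omega), Nat.cast_succ]
    calc _ ≤ (N : ℝ) ^ a / a + ((N + 1 : ℝ) ^ a - (N : ℝ) ^ a) / a := by
          gcongr
          rwa [le_div_iff₀ ha0, mul_comm]
      _ = _ := by ring

lemma sum_Ioc_rpow_neg_le_sub {β : ℝ} (hβ : 0 < β) {k n : ℕ} (hk : 0 < k) (h : k ≤ n) :
    ∑ i ∈ Ioc k n, (i : ℝ) ^ (-(β + 1)) ≤ ((k : ℝ) ^ (-β) - (n : ℝ) ^ (-β)) / β := by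
  induction n, h using Nat.le_induction with
  | base => simp
  | succ n hkn ih =>
    have hstep := mul_rpow_neg_le_sub_rpow hβ.le (x := n) (by exact_mod_cast hk.trans_le hkn)
    rw [sum_Ioc_succ_top hkn, Nat.cast_succ]
    calc _ ≤ ((k : ℝ) ^ (-β) - (n : ℝ) ^ (-β)) / β
          + ((n : ℝ) ^ (-β) - (n + 1 : ℝ) ^ (-β)) / β := by
          gcongr
          rwa [le_div_iff₀ hβ, mul_comm]
      _ = _ := by ring

lemma sum_rpow_neg_le_of_forall_lt {β : ℝ} (hβ : 0 < β) {N : ℕ} (hN : 0 < N) {s : Finset ℕ}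
    (hs : ∀ i ∈ s, N < i) :
    ∑ i ∈ s, (i : ℝ) ^ (-(β + 1)) ≤ (N : ℝ) ^ (-β) / β := by
  set K := max N (s.sup id)
  have hsub : s ⊆ Ioc N K := fun i hi =>
    mem_Ioc.2 ⟨hs i hi, (le_sup (f := id) hi).trans (le_max_right _ _)⟩
  calc ∑ i ∈ s, (i : ℝ) ^ (-(β + 1)) ≤ ∑ i ∈ Ioc N K, (i : ℝ) ^ (-(β + 1)) :=
        sum_le_sum_of_subset_of_nonneg hsub fun _ _ _ => by positivity
    _ ≤ ((N : ℝ) ^ (-β) - (K : ℝ) ^ (-β)) / β := sum_Ioc_rpow_neg_le_sub hβ hN (le_max_left _ _)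
    _ ≤ (N : ℝ) ^ (-β) / β := by gcongr; simp only [sub_le_self_iff]; positivity

lemma exists_tsum_pow_mul_one_sub_pow_le (p : ℕ+ → ℝ) (hp0 : ∀ j, 0 ≤ p j) (hp1 : ∀ j, p j ≤ 1)
    {M α : ℝ} (hM : 0 ≤ M) (hα : 0 < α) (hbound : ∀ j : ℕ+, p j ≤ M * (j : ℝ) ^ (-(1 / α)))
    {l : ℕ} (hl : α < l) :
    ∃ C > 0, ∀ s : ℕ, 0 < s → ∑' i, p i ^ l * (1 - p i) ^ s ≤ C * (s : ℝ) ^ (α - l) := by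
  set β := l / α - 1 with hβ_def
  have hβ : 0 < β := by rw [hβ_def, sub_pos, one_lt_div hα]; exact hl
  have hαβ : α * β = l - α := by rw [hβ_def]; field_simp
  refine ⟨2 * l ! + M ^ l / β, by positivity, fun s hs => ?_⟩
  have hs' : (0 : ℝ) < s := by exact_mod_cast hs
  have hsα : 1 ≤ (s : ℝ) ^ α := one_le_rpow (by exact_mod_cast hs) hα.le
  set N : ℕ := ⌈(s : ℝ) ^ α⌉₊
  have hN : 0 < N := Nat.one_le_ceil_iff.2 (by linarith)
  have hN_le : (N : ℝ) ≤ 2 * (s : ℝ) ^ α := by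
    linarith [Nat.ceil_lt_add_one (by linarith : (0 : ℝ) ≤ (s : ℝ) ^ α)]
  have hhead : ∀ i, p i ^ l * (1 - p i) ^ s ≤ l ! / (s : ℝ) ^ l := fun i =>
    pow_mul_one_sub_pow_le (hp0 i) (hp1 i) l hs
  have htail : ∀ i : ℕ+, p i ^ l * (1 - p i) ^ s ≤ M ^ l * ((i : ℕ) : ℝ) ^ (-(β + 1)) := by
    intro i
    have hi : (0 : ℝ) < (i : ℕ) := by exact_mod_cast i.pos
    calc p i ^ l * (1 - p i) ^ s ≤ p i ^ l := by
          refine mul_le_of_le_one_right (pow_nonneg (hp0 i) l) (pow_le_one₀ ?_ ?_)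
          all_goals linarith [hp0 i, hp1 i]
      _ ≤ (M * ((i : ℕ) : ℝ) ^ (-(1 / α))) ^ l := by gcongr; exacts [hp0 i, hbound i]
      _ = M ^ l * ((i : ℕ) : ℝ) ^ (-(β + 1)) := by
          rw [mul_pow, ← rpow_natCast (((i : ℕ) : ℝ) ^ _), ← rpow_mul hi.le, hβ_def]
          congr 2
          field_simp
          ring
  refine tsum_le_of_sum_le' (by positivity) fun u => ?_
  rw [← sum_filter_add_sum_filter_not u (fun i : ℕ+ => (i : ℕ) ≤ N)]
  have hsum_head : ∑ i ∈ u.filter (fun i : ℕ+ => (i : ℕ) ≤ N), p i ^ l * (1 - p i) ^ s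
      ≤ N * (l ! / (s : ℝ) ^ l) := by
    have hcard : #(u.filter (fun i : ℕ+ => (i : ℕ) ≤ N)) ≤ N := by
      calc _ ≤ #(Icc 1 N) := card_le_card_of_injOn ((↑) : ℕ+ → ℕ)
            (fun i hi => mem_Icc.2 ⟨i.pos, (mem_filter.1 hi).2⟩) PNat.coe_injective.injOn
        _ = N := by simp
    calc _ ≤ ∑ _i ∈ u.filter (fun i : ℕ+ => (i : ℕ) ≤ N), (l ! / (s : ℝ) ^ l) :=
          sum_le_sum fun i _ => hhead i
      _ ≤ N * (l ! / (s : ℝ) ^ l) := by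
          rw [sum_const, nsmul_eq_mul]
          gcongr
  have hsum_tail : ∑ i ∈ u.filter (fun i : ℕ+ => ¬(i : ℕ) ≤ N), p i ^ l * (1 - p i) ^ s
      ≤ M ^ l * ((N : ℝ) ^ (-β) / β) := by
    calc _ ≤ ∑ i ∈ u.filter (fun i : ℕ+ => ¬(i : ℕ) ≤ N), M ^ l * ((i : ℕ) : ℝ) ^ (-(β + 1)) :=
          sum_le_sum fun i _ => htail i
      _ = M ^ l * ∑ i ∈ (u.filter (fun i : ℕ+ => ¬(i : ℕ) ≤ N)).image ((↑) : ℕ+ → ℕ),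
            (i : ℝ) ^ (-(β + 1)) := by
          rw [sum_image fun _ _ _ _ h => PNat.coe_injective h, mul_sum]
      _ ≤ M ^ l * ((N : ℝ) ^ (-β) / β) := by
          gcongr
          refine sum_rpow_neg_le_of_forall_lt hβ hN fun i hi => ?_
          obtain ⟨j, hj, rfl⟩ := mem_image.1 hi
          exact not_le.1 (mem_filter.1 hj).2
  have hhead_le : (N : ℝ) * (l ! / (s : ℝ) ^ l) ≤ 2 * l ! * (s : ℝ) ^ (α - l) := by
    rw [rpow_sub hs', rpow_natCast]
    calc _ ≤ 2 * (s : ℝ) ^ α * (l ! / (s : ℝ) ^ l) := by gcongr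
      _ = _ := by ring
  have htail_le : (N : ℝ) ^ (-β) ≤ (s : ℝ) ^ (α - l) := by
    calc (N : ℝ) ^ (-β) ≤ ((s : ℝ) ^ α) ^ (-β) :=
          rpow_le_rpow_of_nonpos (by positivity) (Nat.le_ceil _) (by linarith)
      _ = (s : ℝ) ^ (α - l) := by rw [← rpow_mul hs'.le]; congr 1; linarith
  calc _ ≤ N * (l ! / (s : ℝ) ^ l) + M ^ l * ((N : ℝ) ^ (-β) / β) := add_le_add hsum_head hsum_tail
    _ ≤ 2 * l ! * (s : ℝ) ^ (α - l) + M ^ l / β * (s : ℝ) ^ (α - l) := by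
        refine add_le_add hhead_le ?_
        rw [mul_div_assoc', div_mul_eq_mul_div]
        gcongr
    _ = _ := by ring

section Triangle

variable {n : ℕ}

lemma sum_triangle_comm {M : Type*} [AddCommMonoid M] (f : ℕ → ℕ → M) :
    ∑ m ∈ Icc 1 n, ∑ k ∈ Icc (n - m + 1) n, f m k
      = ∑ k ∈ Icc 1 n, ∑ m ∈ Icc (n - k + 1) n, f m k :=
  sum_comm' fun m k => by simp only [mem_Icc]; omega

lemma sum_triangle_eq_sum_nsmul {M : Type*} [AddCommMonoid M] (g : ℕ → M) :
    ∑ m ∈ Icc 1 n, ∑ _k ∈ Icc (n - m + 1) n, g m = ∑ m ∈ Icc 1 n, m • g m := by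
  refine sum_congr rfl fun m hm => ?_
  rw [sum_const, Nat.card_Icc]
  congr 1
  have := (mem_Icc.1 hm).2
  omega

lemma sum_triangle_one_div_left :
    ∑ m ∈ Icc 1 n, ∑ _k ∈ Icc (n - m + 1) n, (1 : ℝ) / m = n := by
  rw [sum_triangle_eq_sum_nsmul]
  calc ∑ m ∈ Icc 1 n, m • ((1 : ℝ) / m) = ∑ _m ∈ Icc 1 n, (1 : ℝ) :=
        sum_congr rfl fun m hm => by
          have : (m : ℝ) ≠ 0 := by have := (mem_Icc.1 hm).1; positivity
          rw [nsmul_eq_mul, mul_one_div_cancel this]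
    _ = n := by simp

lemma sum_triangle_one_div_right :
    ∑ m ∈ Icc 1 n, ∑ k ∈ Icc (n - m + 1) n, (1 : ℝ) / k = n := by
  rw [sum_triangle_comm]
  exact sum_triangle_one_div_left

lemma sum_triangle_one_div_mul_le_two :
    ∑ m ∈ Icc 1 n, ∑ k ∈ Icc (n - m + 1) n, (1 : ℝ) / (m * k) ≤ 2 := by
  rcases Nat.eq_zero_or_pos n with rfl | hn
  · simp
  have hn' : (0 : ℝ) < n := by exact_mod_cast hn
  have hterm : ∀ m ∈ Icc 1 n, ∀ k ∈ Icc (n - m + 1) n,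
      (n : ℝ) * (1 / (m * k)) ≤ 1 / m + 1 / k := by
    intro m hm k hk
    obtain ⟨hm1, hmn⟩ := mem_Icc.1 hm
    obtain ⟨hk1, hkn⟩ := mem_Icc.1 hk
    have hm' : (0 : ℝ) < m := by exact_mod_cast hm1
    have hk' : (0 : ℝ) < k := Nat.cast_pos.2 (by omega)
    have hmk : (n : ℝ) ≤ m + k := by exact_mod_cast (by omega : n ≤ m + k)
    rw [div_add_div _ _ hm'.ne' hk'.ne', mul_one_div]
    gcongr
    linarith
  have := sum_le_sum fun m hm => sum_le_sum (hterm m hm)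
  simp only [← mul_sum, sum_add_distrib, sum_triangle_one_div_left,
    sum_triangle_one_div_right] at this
  nlinarith

lemma rpow_sub_one_le_two_mul_rpow_sub_one {α : ℝ} (hα0 : 0 ≤ α) (hα1 : α ≤ 1) {x y : ℝ}
    (hy : 0 < y) (hyx : y ≤ 2 * x) : x ^ (α - 1) ≤ 2 * y ^ (α - 1) := by
  calc x ^ (α - 1) ≤ (y / 2) ^ (α - 1) :=
        rpow_le_rpow_of_nonpos (by positivity) (by linarith) (by linarith)
    _ = (1 / 2) ^ (α - 1) * y ^ (α - 1) := by
          rw [← mul_rpow (by norm_num) hy.le]; ring_nf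
    _ ≤ 2 * y ^ (α - 1) := by
        gcongr
        calc (1 / 2 : ℝ) ^ (α - 1) ≤ (1 / 2) ^ (-1 : ℝ) :=
              rpow_le_rpow_of_exponent_ge (by norm_num) (by norm_num) (by linarith)
          _ = 2 := by norm_num

lemma div_mul_le_of_lt_add {A C α : ℝ} (hC : 0 ≤ C) (hα0 : 0 ≤ α) (hα1 : α ≤ 1) (hA0 : 0 ≤ A)
    {m k : ℕ} (hA : A ≤ C * (m : ℝ) ^ (α - 1)) (hm : 0 < m) (hk : 0 < k) (hn : 0 < n)
    (hmk : n < m + k) :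
    A / (m * k) ≤ 2 / n * (A / m) + 4 * C * (n : ℝ) ^ (α - 1) / n * (1 / k) := by
  have hn' : (0 : ℝ) < n := by exact_mod_cast hn
  have hm' : (0 : ℝ) < m := by exact_mod_cast hm
  have hk' : (0 : ℝ) < k := by exact_mod_cast hk
  have hsplit : A / (m * k) = A / m * (1 / k) := by field_simp
  rcases le_or_gt (2 * m) n with hsmall | hlarge
  · have hk2 : 1 / (k : ℝ) ≤ 2 / n := by
      rw [div_le_div_iff₀ hk' hn']
      exact_mod_cast (by omega : 1 * n ≤ 2 * k)
    have : 0 ≤ 4 * C * (n : ℝ) ^ (α - 1) / n * (1 / k) := by positivity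
    rw [hsplit]
    nlinarith [mul_le_mul_of_nonneg_left hk2 (div_nonneg hA0 hm'.le)]
  · have hA' : A ≤ 2 * C * (n : ℝ) ^ (α - 1) := by
      calc A ≤ C * (m : ℝ) ^ (α - 1) := hA
        _ ≤ C * (2 * (n : ℝ) ^ (α - 1)) := by
            gcongr
            exact rpow_sub_one_le_two_mul_rpow_sub_one hα0 hα1 hn' (by exact_mod_cast hlarge.le)
        _ = _ := by ring
    have hm2 : 1 / (m : ℝ) ≤ 2 / n := by
      rw [div_le_div_iff₀ hm' hn']
      exact_mod_cast (by omega : 1 * n ≤ 2 * m)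
    have hAm : A / m ≤ 4 * C * (n : ℝ) ^ (α - 1) / n := by
      calc A / m = A * (1 / m) := by ring
        _ ≤ 2 * C * (n : ℝ) ^ (α - 1) * (2 / n) := by gcongr
        _ = _ := by ring
    have : 0 ≤ 2 / n * (A / m) := by positivity
    rw [hsplit]
    nlinarith [mul_le_mul_of_nonneg_right hAm (one_div_pos.2 hk').le]

lemma sum_triangle_div_mul_le_of_le_rpow {a : ℕ → ℝ} {C α : ℝ} (hα0 : 0 < α) (hα1 : α ≤ 1)
    (ha0 : ∀ m, 0 ≤ a m) (ha : ∀ m, 0 < m → a m ≤ C * (m : ℝ) ^ (α - 1)) (hn : 0 < n) :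
    ∑ m ∈ Icc 1 n, ∑ k ∈ Icc (n - m + 1) n, a m / (m * k)
      ≤ (2 / α + 4) * C * (n : ℝ) ^ (α - 1) := by
  have hn' : (0 : ℝ) < n := by exact_mod_cast hn
  have hC : 0 ≤ C := by simpa using (ha0 1).trans (ha 1 one_pos)
  set c := 4 * C * (n : ℝ) ^ (α - 1) / n
  have hterm : ∀ m ∈ Icc 1 n, ∀ k ∈ Icc (n - m + 1) n,
      a m / (m * k) ≤ 2 / n * (a m / m) + c * (1 / k) := by
    intro m hm k hk
    obtain ⟨hm1, hmn⟩ := mem_Icc.1 hm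
    obtain ⟨hk1, hkn⟩ := mem_Icc.1 hk
    exact div_mul_le_of_lt_add hC hα0.le hα1 (ha0 m) (ha m hm1) hm1 (by omega) hn (by omega)
  have hhead : ∑ m ∈ Icc 1 n, a m ≤ C * ((n : ℝ) ^ α / α) := by
    calc ∑ m ∈ Icc 1 n, a m ≤ ∑ m ∈ Icc 1 n, C * (m : ℝ) ^ (α - 1) :=
          sum_le_sum fun m hm => ha m (mem_Icc.1 hm).1
      _ ≤ C * ((n : ℝ) ^ α / α) := by
          rw [← mul_sum]; gcongr; exact sum_Icc_rpow_sub_one_le hα0 hα1 n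
  have hmass : ∑ m ∈ Icc 1 n, ∑ _k ∈ Icc (n - m + 1) n, a m / m = ∑ m ∈ Icc 1 n, a m := by
    rw [sum_triangle_eq_sum_nsmul]
    refine sum_congr rfl fun m hm => ?_
    have : (m : ℝ) ≠ 0 := by have := (mem_Icc.1 hm).1; positivity
    rw [nsmul_eq_mul]; field_simp
  calc _ ≤ ∑ m ∈ Icc 1 n, ∑ k ∈ Icc (n - m + 1) n, (2 / n * (a m / m) + c * (1 / k)) :=
        sum_le_sum fun m hm => sum_le_sum (hterm m hm)
    _ = 2 / n * ∑ m ∈ Icc 1 n, a m + c * n := by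
        simp only [sum_add_distrib, ← mul_sum, hmass, sum_triangle_one_div_right]
    _ ≤ 2 / n * (C * ((n : ℝ) ^ α / α)) + c * n := by gcongr
    _ = (2 / α + 4) * C * (n : ℝ) ^ (α - 1) := by
        simp only [c]
        rw [rpow_sub_one hn'.ne']
        field_simp

lemma sum_triangle_add_div_mul_le {b : ℕ → ℝ} {C δ : ℝ} (hδ : 0 ≤ δ) (hb0 : ∀ s, 0 ≤ b s)
    (hb : ∀ s, 0 < s → b s ≤ C * (s : ℝ) ^ (-δ)) (hn : 0 < n) :
    ∑ m ∈ Icc 1 n, ∑ k ∈ Icc (n - m + 1) n, b (m + k) / (m * k) ≤ 2 * C / (n : ℝ) ^ δ := by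
  have hn' : (0 : ℝ) < n := by exact_mod_cast hn
  have hC : 0 ≤ C := by simpa using (hb0 1).trans (hb 1 one_pos)
  have hbn : ∀ s, n ≤ s → b s ≤ C * (n : ℝ) ^ (-δ) := fun s hs =>
    (hb s (by omega)).trans <| by
      gcongr ?_ * ?_
      exact rpow_le_rpow_of_nonpos hn' (Nat.cast_le.2 hs) (neg_nonpos.2 hδ)
  calc _ ≤ ∑ m ∈ Icc 1 n, ∑ k ∈ Icc (n - m + 1) n, C * (n : ℝ) ^ (-δ) * (1 / (m * k)) := by
        refine sum_le_sum fun m hm => sum_le_sum fun k hk => ?_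
        obtain ⟨hm1, hmn⟩ := mem_Icc.1 hm
        obtain ⟨hk1, hkn⟩ := mem_Icc.1 hk
        rw [mul_one_div]
        gcongr
        exact hbn _ (by omega)
    _ ≤ C * (n : ℝ) ^ (-δ) * 2 := by
        simp only [← mul_sum]
        gcongr
        exact sum_triangle_one_div_mul_le_two
    _ = _ := by rw [rpow_neg hn'.le]; ring

end Triangle

lemma sum_Icc_one_div_mul_sub_le (N : ℕ) :
    ∑ k ∈ Icc 1 N, 1 / ((k : ℝ) * ((N + 1 : ℝ) - k)) ≤ 2 * (1 + log (N + 1)) / (N + 1) := by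
  have hN : (0 : ℝ) < N + 1 := by positivity
  have hpartial : ∀ k ∈ Icc 1 N,
      1 / ((k : ℝ) * ((N + 1 : ℝ) - k)) = (1 / k + 1 / ((N + 1 : ℝ) - k)) / (N + 1) := by
    intro k hk
    have hk0 : (0 : ℝ) < k := by exact_mod_cast (mem_Icc.1 hk).1
    have hkN : (0 : ℝ) < (N + 1 : ℝ) - k := by
      have : (k : ℝ) ≤ N := by exact_mod_cast (mem_Icc.1 hk).2
      linarith
    field_simp
    ring
  have hreflect : ∑ k ∈ Icc 1 N, 1 / ((N + 1 : ℝ) - k) = ∑ k ∈ Icc 1 N, 1 / (k : ℝ) := by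
    refine sum_nbij' (fun k => N + 1 - k) (fun k => N + 1 - k) ?_ ?_ ?_ ?_ ?_
    all_goals intro k hk
    all_goals rw [mem_Icc] at hk
    · rw [mem_Icc]; omega
    · rw [mem_Icc]; omega
    · omega
    · omega
    · rw [Nat.cast_sub (by omega)]; push_cast; ring_nf
  have hharmonic : ∑ k ∈ Icc 1 N, 1 / (k : ℝ) ≤ 1 + log (N + 1) := by
    have h := harmonic_le_one_add_log N
    rw [harmonic_eq_sum_Icc] at h
    push_cast at h
    simp only [one_div]
    rcases Nat.eq_zero_or_pos N with rfl | hN0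
    · simp
    · have : log N ≤ log (N + 1) := log_le_log (by exact_mod_cast hN0) (by linarith)
      linarith
  rw [sum_congr rfl hpartial, ← sum_div, sum_add_distrib, hreflect]
  gcongr
  linarith

lemma sum_rpow_neg_mul_one_add_log_le {δ : ℝ} (hδ : 0 < δ) {n : ℕ} (hn : 2 ≤ n)
    {s : Finset ℕ} (hs : ∀ m ∈ s, n < m) :
    ∑ m ∈ s, (m : ℝ) ^ (-(δ + 1)) * (1 + log m) ≤ (3 / δ + 8 / δ ^ 2) * log n * (n : ℝ) ^ (-δ) := by
  have hn' : (2 : ℝ) ≤ n := by exact_mod_cast hn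
  have hn0 : (0 : ℝ) < n := by linarith
  have hlog : 1 ≤ 2 * log n := by
    linarith [log_two_gt_d9, log_le_log (by norm_num) hn']
  have hterm : ∀ m ∈ s, (m : ℝ) ^ (-(δ + 1)) * (1 + log m)
      ≤ 3 * log n * (m : ℝ) ^ (-(δ + 1))
        + 2 / δ * (n : ℝ) ^ (-(δ / 2)) * (m : ℝ) ^ (-(δ / 2 + 1)) := by
    intro m hm
    have hm0 : (0 : ℝ) < m := by exact_mod_cast (Nat.zero_lt_two.trans_le hn).trans (hs m hm)
    have hlogm : 1 + log m ≤ 3 * log n + 2 / δ * ((n : ℝ) ^ (-(δ / 2)) * (m : ℝ) ^ (δ / 2)) := by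
      have h := log_le_rpow_div (div_pos hm0 hn0).le (half_pos hδ)
      rw [log_div hm0.ne' hn0.ne', div_rpow hm0.le hn0.le] at h
      have : (m : ℝ) ^ (δ / 2) / (n : ℝ) ^ (δ / 2) / (δ / 2)
          = 2 / δ * ((n : ℝ) ^ (-(δ / 2)) * (m : ℝ) ^ (δ / 2)) := by
        rw [rpow_neg hn0.le]; field_simp
      linarith
    have hsplit : (m : ℝ) ^ (-(δ + 1)) * (m : ℝ) ^ (δ / 2) = (m : ℝ) ^ (-(δ / 2 + 1)) := by
      rw [← rpow_add hm0]; ring_nf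
    calc _ ≤ (m : ℝ) ^ (-(δ + 1))
          * (3 * log n + 2 / δ * ((n : ℝ) ^ (-(δ / 2)) * (m : ℝ) ^ (δ / 2))) := by gcongr
      _ = _ := by rw [← hsplit]; ring
  have hhalf : (n : ℝ) ^ (-(δ / 2)) * (n : ℝ) ^ (-(δ / 2)) = (n : ℝ) ^ (-δ) := by
    rw [← rpow_add hn0]; ring_nf
  have hn1 : 0 < n := by omega
  calc _ ≤ ∑ m ∈ s, (3 * log n * (m : ℝ) ^ (-(δ + 1))
        + 2 / δ * (n : ℝ) ^ (-(δ / 2)) * (m : ℝ) ^ (-(δ / 2 + 1))) := sum_le_sum hterm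
    _ = 3 * log n * ∑ m ∈ s, (m : ℝ) ^ (-(δ + 1))
        + 2 / δ * (n : ℝ) ^ (-(δ / 2)) * ∑ m ∈ s, (m : ℝ) ^ (-(δ / 2 + 1)) := by
        rw [sum_add_distrib, mul_sum, mul_sum]
    _ ≤ 3 * log n * ((n : ℝ) ^ (-δ) / δ)
        + 2 / δ * (n : ℝ) ^ (-(δ / 2)) * ((n : ℝ) ^ (-(δ / 2)) / (δ / 2)) := by
        have : 0 ≤ log n := by linarith
        gcongr
        · exact sum_rpow_neg_le_of_forall_lt hδ hn1 hs
        · exact sum_rpow_neg_le_of_forall_lt (half_pos hδ) hn1 hs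
    _ = (3 / δ * log n + 4 / δ ^ 2) * (n : ℝ) ^ (-δ) := by
        rw [← hhalf]; field_simp; ring
    _ ≤ (3 / δ * log n + 8 / δ ^ 2 * log n) * (n : ℝ) ^ (-δ) := by
        gcongr
        calc 4 / δ ^ 2 = 4 / δ ^ 2 * 1 := (mul_one _).symm
          _ ≤ 4 / δ ^ 2 * (2 * log n) := by gcongr
          _ = 8 / δ ^ 2 * log n := by ring
    _ = _ := by ring

lemma tsum_sum_div_mul_sub_le {b : ℕ → ℝ} {C δ : ℝ} (hδ : 0 < δ) (hb0 : ∀ m, 0 ≤ b m)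
    (hb : ∀ m, 0 < m → b m ≤ C * (m : ℝ) ^ (-δ)) {n : ℕ} (hn : 2 ≤ n) :
    ∑' j : ℕ, ∑ k ∈ Icc 1 (n + j), b (n + 1 + j) / (k * ((n + 1 + j : ℝ) - k))
      ≤ 2 * C * (3 / δ + 8 / δ ^ 2) * log n / (n : ℝ) ^ δ := by
  have hC : 0 ≤ C := by simpa using (hb0 1).trans (hb 1 one_pos)
  have hlog : 0 ≤ log n := log_nonneg (by exact_mod_cast (by omega : 1 ≤ n))
  have hterm : ∀ j, ∑ k ∈ Icc 1 (n + j), b (n + 1 + j) / (k * ((n + 1 + j : ℝ) - k))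
      ≤ 2 * C * (((n + 1 + j : ℕ) : ℝ) ^ (-(δ + 1)) * (1 + log (n + 1 + j : ℕ))) := by
    intro j
    have hm : ((n + 1 + j : ℕ) : ℝ) = ((n + j : ℕ) : ℝ) + 1 := by push_cast; ring
    have hm0 : (0 : ℝ) < ((n + 1 + j : ℕ) : ℝ) := by positivity
    have hinner := sum_Icc_one_div_mul_sub_le (n + j)
    rw [← hm] at hinner
    rw [show (n + 1 + j : ℝ) = ((n + 1 + j : ℕ) : ℝ) by push_cast; ring]
    simp only [div_eq_mul_one_div (b _), ← mul_sum]
    calc _ ≤ (C * ((n + 1 + j : ℕ) : ℝ) ^ (-δ))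
          * (2 * (1 + log (n + 1 + j : ℕ)) / ((n + 1 + j : ℕ) : ℝ)) := by
          gcongr
          · refine sum_nonneg fun k hk => one_div_nonneg.2 (mul_nonneg k.cast_nonneg ?_)
            have := (mem_Icc.1 hk).2
            exact sub_nonneg.2 (by exact_mod_cast (by omega : k ≤ n + 1 + j))
          · exact hb _ (by omega)
      _ = _ := by
          rw [neg_add, rpow_add hm0, rpow_neg_one]
          ring
  refine tsum_le_of_sum_le' (by positivity) fun u => ?_
  calc ∑ j ∈ u, ∑ k ∈ Icc 1 (n + j), b (n + 1 + j) / (k * ((n + 1 + j : ℝ) - k))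
      ≤ 2 * C * ∑ m ∈ u.image (n + 1 + ·), (m : ℝ) ^ (-(δ + 1)) * (1 + log m) := by
        rw [sum_image fun _ _ _ _ h => by simpa using h, mul_sum]
        exact sum_le_sum fun j _ => hterm j
    _ ≤ 2 * C * ((3 / δ + 8 / δ ^ 2) * log n * (n : ℝ) ^ (-δ)) := by
        gcongr
        refine sum_rpow_neg_mul_one_add_log_le hδ hn fun m hm => ?_
        obtain ⟨j, -, rfl⟩ := mem_image.1 hm
        omega
    _ = _ := by rw [rpow_neg (by positivity)]; ring

lemma le_one_of_tsum_eq_one {ι : Type*} {p : ι → ℝ} (hp0 : ∀ j, 0 ≤ p j) (hsum : ∑' j, p j = 1)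
    (j : ι) : p j ≤ 1 := by
  have hp : Summable p := by
    by_contra h
    rw [tsum_eq_zero_of_not_summable h] at hsum
    exact zero_ne_one hsum
  exact hsum ▸ hp.le_tsum j fun i _ => hp0 i

theorem variance_remainder_bounds_general (p : ℕ+ → ℝ)
    (hp0 : ∀ j, 0 ≤ p j) (hsum : ∑' j, p j = 1)
    (M α : ℝ) (hM : 0 < M) (hα : α ∈ Set.Ioo (0 : ℝ) 1)
    (hbound : ∀ j : ℕ+, p j ≤ M * (j : ℝ) ^ (-(1 / α))) :
    (∃ C₁ > 0, ∀ n : ℕ, 2 ≤ n →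
      ∑ m ∈ Finset.Icc 1 n, ∑ k ∈ Finset.Icc (n - m + 1) n,
          (∑' i : ℕ+, p i * (1 - p i) ^ m) / (m * k)
        ≤ C₁ * ((n : ℝ) ^ (-(1 - α)) + Real.log n / n)) ∧
    (∀ ℓ : ℕ, 1 ≤ ℓ → ∃ C₂ > 0, ∀ n : ℕ, 1 ≤ n →
      ∑ m ∈ Finset.Icc 1 n, ∑ k ∈ Finset.Icc (n - m + 1) n,
          (∑' i : ℕ+, p i ^ ℓ * (1 - p i) ^ (m + k)) / (m * k)
        ≤ C₂ / (n : ℝ) ^ ((ℓ : ℝ) - α)) ∧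
    (∀ ℓ : ℕ, 1 ≤ ℓ → ∃ C₃ > 0, ∀ n : ℕ, 2 ≤ n →
      ∑' j : ℕ, ∑ k ∈ Finset.Icc 1 (n + j),
          (∑' i : ℕ+, p i ^ ℓ * (1 - p i) ^ (n + 1 + j)) / (k * ((n + 1 + j : ℝ) - k))
        ≤ C₃ * Real.log n / (n : ℝ) ^ ((ℓ : ℝ) - α)) := by
  obtain ⟨hα0, hα1⟩ := hα
  have hp1 := le_one_of_tsum_eq_one hp0 hsum
  have hF0 (ℓ s : ℕ) : 0 ≤ ∑' i, p i ^ ℓ * (1 - p i) ^ s :=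
    tsum_nonneg fun i => mul_nonneg (pow_nonneg (hp0 i) ℓ) (pow_nonneg (sub_nonneg.2 (hp1 i)) s)
  have hdecay (ℓ : ℕ) (hℓ : 1 ≤ ℓ) : ∃ C > 0, ∀ s : ℕ, 0 < s →
      ∑' i, p i ^ ℓ * (1 - p i) ^ s ≤ C * (s : ℝ) ^ (-((ℓ : ℝ) - α)) := by
    simpa only [neg_sub] using exists_tsum_pow_mul_one_sub_pow_le p hp0 hp1 hM.le hα0 hbound
      (l := ℓ) (by exact_mod_cast hα1.trans_le (Nat.one_le_cast.2 hℓ))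
  refine ⟨?_, fun ℓ hℓ => ?_, fun ℓ hℓ => ?_⟩
  · obtain ⟨C, hC, hF⟩ := hdecay 1 le_rfl
    refine ⟨(2 / α + 4) * C, by positivity, fun n hn => ?_⟩
    calc _ ≤ (2 / α + 4) * C * (n : ℝ) ^ (α - 1) :=
          sum_triangle_div_mul_le_of_le_rpow hα0 hα1.le (fun m => by simpa using hF0 1 m)
            (fun m hm => by simpa using hF m hm) (by omega)
      _ ≤ _ := by
          rw [neg_sub]
          gcongr
          exact le_add_of_nonneg_right (by positivity)
  all_goals
    obtain ⟨C, hC, hF⟩ := hdecay ℓ hℓ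
    have hδ : 0 < (ℓ : ℝ) - α := by linarith [(Nat.one_le_cast (α := ℝ)).2 hℓ]
  · exact ⟨2 * C, by positivity, fun n hn => sum_triangle_add_div_mul_le hδ.le (hF0 ℓ) hF hn⟩
  · exact ⟨2 * C * (3 / ((ℓ : ℝ) - α) + 8 / ((ℓ : ℝ) - α) ^ 2), by positivity,
      fun n hn => tsum_sum_div_mul_sub_le hδ (hF0 ℓ) hF hn⟩

/-- variance remainder bounds. Let `p` be a nonincreasing pmf with
`p j ≤ M j^{−1/α}`, `M > 0`, `α ∈ (0,1)`, and write `E[(1−p_X)^m] = ∑_i p_i (1−p_i)^m`.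
Then:
(i) `∑_{m=1}^n ∑_{k=n−m+1}^n E[(1−p_X)^m]/(mk) ≤ C₁ (n^{−(1−α)} + (log n)/n)`;
(ii) for every `ℓ ≥ 1`,
`∑_{m=1}^n ∑_{k=n−m+1}^n (∑_i p_i^ℓ (1−p_i)^{m+k})/(mk) ≤ C₂ / n^{ℓ−α}`;
(iii) for every `ℓ ≥ 1`,
`∑_{m=n+1}^∞ ∑_{k=1}^{m−1} (∑_i p_i^ℓ (1−p_i)^m)/(k(m−k)) ≤ C₃ (log n)/n^{ℓ−α}`. -/
theorem variance_remainder_bounds (p : ℕ+ → ℝ)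
    (hp0 : ∀ j, 0 ≤ p j) (hsum : ∑' j, p j = 1) (hmono : Antitone p)
    (M α : ℝ) (hM : 0 < M) (hα : α ∈ Set.Ioo (0 : ℝ) 1)
    (hbound : ∀ j : ℕ+, p j ≤ M * (j : ℝ) ^ (-(1 / α))) :
    (∃ C₁ > 0, ∀ n : ℕ, 2 ≤ n →
      ∑ m ∈ Finset.Icc 1 n, ∑ k ∈ Finset.Icc (n - m + 1) n,
          (∑' i : ℕ+, p i * (1 - p i) ^ m) / (m * k)
        ≤ C₁ * ((n : ℝ) ^ (-(1 - α)) + Real.log n / n)) ∧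
    (∀ ℓ : ℕ, 1 ≤ ℓ → ∃ C₂ > 0, ∀ n : ℕ, 1 ≤ n →
      ∑ m ∈ Finset.Icc 1 n, ∑ k ∈ Finset.Icc (n - m + 1) n,
          (∑' i : ℕ+, p i ^ ℓ * (1 - p i) ^ (m + k)) / (m * k)
        ≤ C₂ / (n : ℝ) ^ ((ℓ : ℝ) - α)) ∧
    (∀ ℓ : ℕ, 1 ≤ ℓ → ∃ C₃ > 0, ∀ n : ℕ, 2 ≤ n →
      ∑' j : ℕ, ∑ k ∈ Finset.Icc 1 (n + j),
          (∑' i : ℕ+, p i ^ ℓ * (1 - p i) ^ (n + 1 + j)) / (k * ((n + 1 + j : ℝ) - k))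
        ≤ C₃ * Real.log n / (n : ℝ) ^ ((ℓ : ℝ) - α)) :=
  variance_remainder_bounds_general p hp0 hsum M α hM hα hbound
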